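/- arXiv:1008.1952 — 4 statements merged into one kernel-verified Lean document; each statement's English description precedes it below -/
import Mathlib

section
/- For H1 with δ = 0, the triple product identity T = (H_{jℓ} ∂_{u_ℓ} H_{ℓi} − H_{ℓi} ∂_{u_ℓ} H_{jℓ}) + (H_{ℓi} ∂_{u_i} H_{ij} − H_{ij} ∂_{u_i} H_{ℓi}) + (H_{ij} ∂_{u_j} H_{jℓ} − H_{jℓ} ∂_{u_j} H_{ij}) vanishes identically, where H_{ij} = (u_i - u_j)²/(α_j - α_i). -/
/-!
After differentiating, each bracket of `T` collapses to
`-2 (u_i - u_j)(u_j - u_ℓ)(u_ℓ - u_i)` times a product of two of the reciprocals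
`1/(α_ℓ - α_j)`, `1/(α_i - α_ℓ)`, `1/(α_j - α_i)`. The sum of the three pairwise
products of reciprocals of `x, y, z` is `(x + y + z)/(x y z)`, which vanishes here
because the three parameter differences sum to zero.
-/

theorem deriv_sub_sq_div (a c x : ℝ) :
    deriv (fun t => (t - a) ^ 2 / c) x = 2 * (x - a) / c := by
  simp

theorem deriv_sq_sub_div (a c x : ℝ) :
    deriv (fun t => (a - t) ^ 2 / c) x = 2 * (x - a) / c := by
  simp_rw [← neg_sub _ a, neg_sq]
  exact deriv_sub_sq_div a c x

theorem inv_mul_inv_add_cyclic_eq_zero {K : Type*} [Field K] {x y z : K}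
    (hx : x ≠ 0) (hy : y ≠ 0) (hz : z ≠ 0) (hsum : x + y + z = 0) :
    x⁻¹ * y⁻¹ + y⁻¹ * z⁻¹ + z⁻¹ * x⁻¹ = 0 := by
  field_simp
  linear_combination hsum

/-- For H1 (δ = 0), with `H_{ij}(u_i,u_j) = (u_i - u_j)²/(α_j - α_i)`, the triple
product expression `T_{ijℓ}` vanishes identically. -/
theorem H1_triple_product_identity (ai aj al ui uj ul : ℝ)
    (hij : ai ≠ aj) (hjl : aj ≠ al) (hli : al ≠ ai) :
    (((uj - ul)^2 / (al - aj)) * deriv (fun t => (t - ui)^2 / (ai - al)) ul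
        - ((ul - ui)^2 / (ai - al)) * deriv (fun t => (uj - t)^2 / (al - aj)) ul)
      + (((ul - ui)^2 / (ai - al)) * deriv (fun t => (t - uj)^2 / (aj - ai)) ui
        - ((ui - uj)^2 / (aj - ai)) * deriv (fun t => (ul - t)^2 / (ai - al)) ui)
      + (((ui - uj)^2 / (aj - ai)) * deriv (fun t => (t - ul)^2 / (al - aj)) uj
        - ((uj - ul)^2 / (al - aj)) * deriv (fun t => (ui - t)^2 / (aj - ai)) uj)
      = 0 := by
  simp only [deriv_sub_sq_div, deriv_sq_sub_div]
  have hcyc := inv_mul_inv_add_cyclic_eq_zero (sub_ne_zero.mpr hjl.symm)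
    (sub_ne_zero.mpr hli.symm) (sub_ne_zero.mpr hij.symm) (by ring)
  linear_combination (-2 * (ui - uj) * (uj - ul) * (ul - ui)) * hcyc
end

section
/- Consider the Lagrangian L_{ij} = (∂u/∂α_i)(∂u_i/∂α_j) − (∂u/∂α_j)(∂u_j/∂α_i) − (δ²(α_i−α_j) − (u_i−u_j)²/(α_i−α_j))(∂u/∂α_i)(∂u/∂α_j) − n_j((u_i−u_j)/(α_i−α_j))(∂u/∂α_i) + n_i((u_j−u_i)/(α_j−α_i))(∂u/∂α_j), viewed as a function of the fields u, u_i, u_j of (α_i, α_j). The Euler–Lagrange equation obtained by varying u_i is equivalent (up to a nonzero factor) to the PDE ∂²u/∂α_i∂α_j = 2((u_i−u_j)/(α_i−α_j))(∂u/∂α_i)(∂u/∂α_j) + (n_i/(α_i−α_j))(∂u/∂α_j) + (n_j/(α_j−α_i))(∂u/∂α_i). -/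
/-- Partial derivative of a function of two real variables in the first slot. -/
noncomputable def dA (f : ℝ → ℝ → ℝ) (a b : ℝ) : ℝ := deriv (fun t => f t b) a

/-- Partial derivative of a function of two real variables in the second slot. -/
noncomputable def dB (f : ℝ → ℝ → ℝ) (a b : ℝ) : ℝ := deriv (fun t => f a t) b

/-- The Lagrangian `L_{ij}` as a function of the independent variables
`(a,b) = (α_i,α_j)`, the field values `U, Ui, Uj` and the derivative values
`Ua = ∂u/∂α_i`, `Ub = ∂u/∂α_j`, `Uib = ∂u_i/∂α_j`, `Uja = ∂u_j/∂α_i`. -/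
noncomputable def Lfun (δ ni nj a b _U Ui Uj Ua Ub Uib Uja : ℝ) : ℝ :=
  Ua * Uib - Ub * Uja
    - (δ^2 * (a - b) - (Ui - Uj)^2 / (a - b)) * Ua * Ub
    - nj * ((Ui - Uj) / (a - b)) * Ua
    + ni * ((Uj - Ui) / (b - a)) * Ub

lemma deriv_quadratic (c0 c1 c2 x : ℝ) :
    deriv (fun v => c0 + c1 * v + c2 * v ^ 2) x = c1 + 2 * c2 * x := by
  have h2 : HasDerivAt (fun v : ℝ => v ^ 2) (2 * x) x := by
    simpa using hasDerivAt_pow 2 x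
  have h := ((hasDerivAt_const x c0).add ((hasDerivAt_id x).const_mul c1)).add
    (h2.const_mul c2)
  simp only [id, Pi.add_def] at h
  rw [h.deriv]; ring

/-- The Euler–Lagrange equation for the field `u_i`,
`∂_{α_j}(∂L/∂(∂_{α_j}u_i)) − ∂L/∂u_i = 0`, is equivalent to the PDE
`u_{,ij} = 2((u_i−u_j)/(α_i−α_j)) u_{,i} u_{,j} + (n_i/(α_i−α_j)) u_{,j}
  + (n_j/(α_j−α_i)) u_{,i}`. -/
theorem EL_ui_equivalent_to_PDE (δ ni nj : ℝ) (u ui uj : ℝ → ℝ → ℝ)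
    (hu : ContDiff ℝ (⊤ : ℕ∞) fun p : ℝ × ℝ => u p.1 p.2)
    (hui : ContDiff ℝ (⊤ : ℕ∞) fun p : ℝ × ℝ => ui p.1 p.2)
    (huj : ContDiff ℝ (⊤ : ℕ∞) fun p : ℝ × ℝ => uj p.1 p.2) :
    ∀ a b : ℝ, a ≠ b →
      ((deriv (fun t =>
            deriv (fun v =>
              Lfun δ ni nj a t (u a t) (ui a t) (uj a t)
                (dA u a t) (dB u a t) v (dA uj a t)) (dB ui a t)) b
          - deriv (fun v =>
              Lfun δ ni nj a b (u a b) v (uj a b)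
                (dA u a b) (dB u a b) (dB ui a b) (dA uj a b)) (ui a b)
        = 0)
      ↔
      (dB (fun s t => dA u s t) a b
        = 2 * ((ui a b - uj a b) / (a - b)) * dA u a b * dB u a b
          + (ni / (a - b)) * dB u a b
          + (nj / (b - a)) * dA u a b)) := by
  intro a b hab
  have hab' : a - b ≠ 0 := sub_ne_zero.mpr hab
  have hba' : b - a ≠ 0 := sub_ne_zero.mpr (Ne.symm hab)
  have hUib : (fun t => deriv (fun v =>
      Lfun δ ni nj a t (u a t) (ui a t) (uj a t)
        (dA u a t) (dB u a t) v (dA uj a t)) (dB ui a t)) = fun t => dA u a t := by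
    funext t
    have h : HasDerivAt (fun v : ℝ =>
        dA u a t * v - dB u a t * dA uj a t
          - (δ^2 * (a - t) - (ui a t - uj a t)^2 / (a - t)) * dA u a t * dB u a t
          - nj * ((ui a t - uj a t) / (a - t)) * dA u a t
          + ni * ((uj a t - ui a t) / (t - a)) * dB u a t) (dA u a t) (dB ui a t) := by
      simpa using ((((hasDerivAt_id (dB ui a t)).const_mul (dA u a t)).sub_const
        (dB u a t * dA uj a t)).sub_const ((δ^2 * (a - t) - (ui a t - uj a t)^2 / (a - t)) * dA u a t * dB u a t) |>.sub_const (nj * ((ui a t - uj a t) / (a - t)) * dA u a t) |>.add_const (ni * ((uj a t - ui a t) / (t - a)) * dB u a t))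
    simpa only [Lfun] using h.deriv
  have hfun : (fun v => Lfun δ ni nj a b (u a b) v (uj a b)
        (dA u a b) (dB u a b) (dB ui a b) (dA uj a b))
      = fun v =>
        (dA u a b * dB ui a b - dB u a b * dA uj a b
          - δ^2 * (a - b) * dA u a b * dB u a b
          + (uj a b)^2 / (a - b) * dA u a b * dB u a b
          + nj * (uj a b / (a - b)) * dA u a b
          + ni * (uj a b / (b - a)) * dB u a b)
        + (-2 * uj a b / (a - b) * dA u a b * dB u a b
            - nj / (a - b) * dA u a b - ni / (b - a) * dB u a b) * v
        + (dA u a b * dB u a b / (a - b)) * v ^ 2 := by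
    funext v
    simp only [Lfun]
    field_simp
    ring
  rw [hUib, hfun, deriv_quadratic]
  have hdB : deriv (fun t => dA u a t) b = dB (fun s t => dA u s t) a b := rfl
  rw [hdB, sub_eq_zero]
  have key : (-2 * uj a b / (a - b) * dA u a b * dB u a b
        - nj / (a - b) * dA u a b - ni / (b - a) * dB u a b)
      + 2 * (dA u a b * dB u a b / (a - b)) * ui a b
      = 2 * ((ui a b - uj a b) / (a - b)) * dA u a b * dB u a b
          + (ni / (a - b)) * dB u a b + (nj / (b - a)) * dA u a b := by
    field_simp
    ring
  rw [key]
end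

section
/- For H3 with δ = 0, the identity T_{ijℓ} := (H_{jℓ}∂_{u_ℓ}H_{ℓi} − H_{ℓi}∂_{u_ℓ}H_{jℓ}) + (H_{ℓi}∂_{u_i}H_{ij} − H_{ij}∂_{u_i}H_{ℓi}) + (H_{ij}∂_{u_j}H_{jℓ} − H_{jℓ}∂_{u_j}H_{ij}) = 0 holds identically, where H_{ij}(u_i,u_j) = (e^{-(α_i+α_j)/2}(u_i² + u_j²) − (e^{-α_i} + e^{-α_j})u_iu_j)/(e^{-α_i} − e^{-α_j}). -/

private lemma d1 (A B c u D v : ℝ) :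
    deriv (fun t : ℝ => (A * (t ^ 2 + c) - B * t * u) / D) v = (2 * A * v - B * u) / D := by
  have h : HasDerivAt (fun t : ℝ => (A * (t ^ 2 + c) - B * t * u) / D)
      ((A * (2 * v) - B * u) / D) v := by
    have hp : HasDerivAt (fun t : ℝ => t ^ 2) (2 * v) v := by
      simpa using hasDerivAt_pow 2 v
    have h1 : HasDerivAt (fun t : ℝ => A * (t ^ 2 + c)) (A * (2 * v)) v :=
      (hp.add_const c).const_mul A
    have h2 : HasDerivAt (fun t : ℝ => B * t * u) (B * u) v := by
      simpa [mul_assoc, mul_comm] using ((hasDerivAt_id v).const_mul B).mul_const u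
    exact (h1.sub h2).div_const D
  rw [h.deriv]; ring

private lemma d2 (A B c u D v : ℝ) :
    deriv (fun t : ℝ => (A * (c + t ^ 2) - B * u * t) / D) v = (2 * A * v - B * u) / D := by
  have h : HasDerivAt (fun t : ℝ => (A * (c + t ^ 2) - B * u * t) / D)
      ((A * (2 * v) - B * u) / D) v := by
    have hp : HasDerivAt (fun t : ℝ => t ^ 2) (2 * v) v := by
      simpa using hasDerivAt_pow 2 v
    have h1 : HasDerivAt (fun t : ℝ => A * (c + t ^ 2)) (A * (2 * v)) v :=
      (hp.const_add c).const_mul A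
    have h2 : HasDerivAt (fun t : ℝ => B * u * t) (B * u) v := by
      simpa using (hasDerivAt_id v).const_mul (B * u)
    exact (h1.sub h2).div_const D
  rw [h.deriv]; ring

/-- For H3 (δ = 0), with
`H_{ij}(u_i,u_j) = (e^{-(α_i+α_j)/2}(u_i²+u_j²) − (e^{-α_i}+e^{-α_j})u_iu_j)
  /(e^{-α_i} − e^{-α_j})`,
the triple product expression `T_{ijℓ}` vanishes identically. -/
theorem H3_triple_product_identity (ai aj al ui uj ul : ℝ)
    (hij : Real.exp (-ai) ≠ Real.exp (-aj))
    (hjl : Real.exp (-aj) ≠ Real.exp (-al))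
    (hli : Real.exp (-al) ≠ Real.exp (-ai)) :
    (((Real.exp (-(aj + al) / 2) * (uj^2 + ul^2)
          - (Real.exp (-aj) + Real.exp (-al)) * uj * ul)
        / (Real.exp (-aj) - Real.exp (-al)))
      * deriv (fun t => (Real.exp (-(al + ai) / 2) * (t^2 + ui^2)
          - (Real.exp (-al) + Real.exp (-ai)) * t * ui)
        / (Real.exp (-al) - Real.exp (-ai))) ul
      - ((Real.exp (-(al + ai) / 2) * (ul^2 + ui^2)
          - (Real.exp (-al) + Real.exp (-ai)) * ul * ui)
        / (Real.exp (-al) - Real.exp (-ai)))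
      * deriv (fun t => (Real.exp (-(aj + al) / 2) * (uj^2 + t^2)
          - (Real.exp (-aj) + Real.exp (-al)) * uj * t)
        / (Real.exp (-aj) - Real.exp (-al))) ul)
    + (((Real.exp (-(al + ai) / 2) * (ul^2 + ui^2)
          - (Real.exp (-al) + Real.exp (-ai)) * ul * ui)
        / (Real.exp (-al) - Real.exp (-ai)))
      * deriv (fun t => (Real.exp (-(ai + aj) / 2) * (t^2 + uj^2)
          - (Real.exp (-ai) + Real.exp (-aj)) * t * uj)
        / (Real.exp (-ai) - Real.exp (-aj))) ui
      - ((Real.exp (-(ai + aj) / 2) * (ui^2 + uj^2)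
          - (Real.exp (-ai) + Real.exp (-aj)) * ui * uj)
        / (Real.exp (-ai) - Real.exp (-aj)))
      * deriv (fun t => (Real.exp (-(al + ai) / 2) * (ul^2 + t^2)
          - (Real.exp (-al) + Real.exp (-ai)) * ul * t)
        / (Real.exp (-al) - Real.exp (-ai))) ui)
    + (((Real.exp (-(ai + aj) / 2) * (ui^2 + uj^2)
          - (Real.exp (-ai) + Real.exp (-aj)) * ui * uj)
        / (Real.exp (-ai) - Real.exp (-aj)))
      * deriv (fun t => (Real.exp (-(aj + al) / 2) * (t^2 + ul^2)
          - (Real.exp (-aj) + Real.exp (-al)) * t * ul)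
        / (Real.exp (-aj) - Real.exp (-al))) uj
      - ((Real.exp (-(aj + al) / 2) * (uj^2 + ul^2)
          - (Real.exp (-aj) + Real.exp (-al)) * uj * ul)
        / (Real.exp (-aj) - Real.exp (-al)))
      * deriv (fun t => (Real.exp (-(ai + aj) / 2) * (ui^2 + t^2)
          - (Real.exp (-ai) + Real.exp (-aj)) * ui * t)
        / (Real.exp (-ai) - Real.exp (-aj))) uj)
    = 0 := by
  rw [d1, d1, d1, d2, d2, d2]
  have ei : Real.exp (-ai) = Real.exp (-ai / 2) ^ 2 := by
    rw [← Real.exp_nat_mul]; ring_nf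
  have ej : Real.exp (-aj) = Real.exp (-aj / 2) ^ 2 := by
    rw [← Real.exp_nat_mul]; ring_nf
  have el : Real.exp (-al) = Real.exp (-al / 2) ^ 2 := by
    rw [← Real.exp_nat_mul]; ring_nf
  have eij : Real.exp (-(ai + aj) / 2) = Real.exp (-ai / 2) * Real.exp (-aj / 2) := by
    rw [← Real.exp_add]; ring_nf
  have ejl : Real.exp (-(aj + al) / 2) = Real.exp (-aj / 2) * Real.exp (-al / 2) := by
    rw [← Real.exp_add]; ring_nf
  have eli : Real.exp (-(al + ai) / 2) = Real.exp (-al / 2) * Real.exp (-ai / 2) := by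
    rw [← Real.exp_add]; ring_nf
  have hij' : Real.exp (-ai / 2) ^ 2 - Real.exp (-aj / 2) ^ 2 ≠ 0 := by
    rw [← ei, ← ej]; exact sub_ne_zero_of_ne hij
  have hjl' : Real.exp (-aj / 2) ^ 2 - Real.exp (-al / 2) ^ 2 ≠ 0 := by
    rw [← ej, ← el]; exact sub_ne_zero_of_ne hjl
  have hli' : Real.exp (-al / 2) ^ 2 - Real.exp (-ai / 2) ^ 2 ≠ 0 := by
    rw [← el, ← ei]; exact sub_ne_zero_of_ne hli
  rw [ei, ej, el, eij, ejl, eli]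
  set x := Real.exp (-ai / 2)
  set y := Real.exp (-aj / 2)
  set z := Real.exp (-al / 2)
  field_simp
  ring
end

section
/- For H1, the quantity H_{ℓi}(u, u_{iℓ})·H_{ℓi}(u_{jℓ}, u_{ij}) − H_{ij}(u, u_{ij})·H_{ij}(u_{iℓ}, u_{jℓ}) vanishes on solutions of the three equations Q_{ij} = 0, Q_{jℓ} = 0, Q_{ℓi} = 0 around the cube. Explicitly: with H_{ij}(x,y) = (x−y)²/(α_j−α_i), u_{ij} = u − (α_i−α_j)/(u_i−u_j), u_{jℓ} = u − (α_j−α_ℓ)/(u_j−u_ℓ), u_{iℓ} = u − (α_ℓ−α_i)/(u_ℓ−u_i), one has ((u−u_{iℓ})²(u_{jℓ}−u_{ij})²)/(α_i−α_ℓ)² = ((u−u_{ij})²(u_{iℓ}−u_{jℓ})²)/(α_j−α_i)². -/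
/-- For H1, with `u_{ij} = u − (α_i−α_j)/(u_i−u_j)` (and cyclically) and
`H_{ij}(x,y) = (x−y)²/(α_j−α_i)`, the quantity
`H_{ℓi}(u,u_{iℓ})H_{ℓi}(u_{jℓ},u_{ij}) − H_{ij}(u,u_{ij})H_{ij}(u_{iℓ},u_{jℓ})`
vanishes on solutions around the cube; explicitly
`(u−u_{iℓ})²(u_{jℓ}−u_{ij})²/(α_i−α_ℓ)² = (u−u_{ij})²(u_{iℓ}−u_{jℓ})²/(α_j−α_i)²`. -/
theorem H1_diagonal_product_identity (ai aj al u ui uj ul : ℝ)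
    (haij : ai ≠ aj) (hajl : aj ≠ al) (hali : al ≠ ai)
    (hij : ui ≠ uj) (hjl : uj ≠ ul) (hli : ul ≠ ui) :
    ((u - (u - (al - ai) / (ul - ui)))^2
        * ((u - (aj - al) / (uj - ul)) - (u - (ai - aj) / (ui - uj)))^2)
      / (ai - al)^2
    = ((u - (u - (ai - aj) / (ui - uj)))^2
        * ((u - (al - ai) / (ul - ui)) - (u - (aj - al) / (uj - ul)))^2)
      / (aj - ai)^2 := by
  have h1 : ui - uj ≠ 0 := sub_ne_zero.mpr hij
  have h2 : uj - ul ≠ 0 := sub_ne_zero.mpr hjl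
  have h3 : ul - ui ≠ 0 := sub_ne_zero.mpr hli
  have h4 : ai - al ≠ 0 := sub_ne_zero.mpr (Ne.symm hali)
  have h5 : aj - ai ≠ 0 := sub_ne_zero.mpr (Ne.symm haij)
  field_simp
  ring
end
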